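/- arXiv:1409.3707 — 10 statements merged into one kernel-verified Lean document; each statement's English description precedes it below -/
import Mathlib

section
/- For all integers n ≥ 1 and i ≥ 1, the Horadam sequence satisfies W_{ni+i} = V_i · W_{ni} − (−q)^i · W_{ni−i}, where V is the generalized Lucas sequence with the same parameters p, q. -/
/-- Horadam sequence identity: W_{ni+i} = V_i · W_{ni} − (−q)^i · W_{ni−i}. -/
theorem horadam_step (a b p q : ℤ) (W V : ℕ → ℤ)
    (hW0 : W 0 = a) (hW1 : W 1 = b)
    (hW : ∀ n : ℕ, W (n + 2) = p * W (n + 1) + q * W n)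
    (hV0 : V 0 = 2) (hV1 : V 1 = p)
    (hV : ∀ n : ℕ, V (n + 2) = p * V (n + 1) + q * V n)
    (n i : ℕ) (hn : 1 ≤ n) (hi : 1 ≤ i) :
    W (n * i + i) = V i * W (n * i) - (-q) ^ i * W (n * i - i) := by
  have key : ∀ j : ℕ, ∀ k : ℕ, W (k + j + j) = V j * W (k + j) - (-q) ^ j * W k := by
    intro j
    induction j using Nat.twoStepInduction with
    | zero => intro k; simp [hV0]; ring
    | one =>
      intro k
      have h := hW k
      simp only [hV1, pow_one]
      have e : k + 1 + 1 = k + 2 := by omega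
      rw [e, h]; ring
    | more i ih1 ih2 =>
      intro k
      have h1 := ih2 (k + 1)
      have h2 := ih1 (k + 2)
      have h3 := hW (k + i + 2 + i)
      have h4 := hW k
      have hv := hV i
      have e1 : k + (i + 2) + (i + 2) = k + i + 2 + i + 2 := by omega
      have e2 : k + 1 + (i + 1) + (i + 1) = k + i + 2 + i + 1 := by omega
      have e3 : k + 1 + (i + 1) = k + (i + 2) := by omega
      have e4 : k + 2 + i + i = k + i + 2 + i := by omega
      have e5 : k + 2 + i = k + (i + 2) := by omega
      rw [e2, e3] at h1
      rw [e4, e5] at h2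
      rw [e1, h3, h1, h2, h4, hv, pow_succ, pow_succ]
      ring
  have him : i ≤ n * i := Nat.le_mul_of_pos_left i hn
  have e2 : (n * i - i) + i = n * i := by omega
  have h := key i (n * i - i)
  rw [e2] at h
  exact h
end

section
/- For all integers n ≥ 2 and i ≥ 1, the Horadam sequence satisfies W_{ni+i} = V_i^{n−1} · W_{2i} − (−q)^i · Σ_{j=1}^{n−1} V_i^{n−1−j} · W_{ij}, where V is the generalized Lucas sequence with the same parameters p, q. -/
/-!
Along an arithmetic progression of step `i`, the Horadam sequence again satisfies a second-order
linear recurrence, `W (m + 2 i) = V i * W (m + i) - (-q) ^ i * W m`. Unrolling such a recurrence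
`u (k + 2) = x u (k + 1) - c u k` from `u 2` expresses `u (N + 2)` as `x ^ N u 2` corrected by a
weighted sum of the earlier terms, which for `u k = W (i k)` is the claimed identity.
-/

section TwoTermRecurrence

variable {R : Type*} [CommRing R] {u : ℕ → R} {x c : R}

theorem eq_pow_mul_sub_sum_of_recurrence (hu : ∀ k, u (k + 2) = x * u (k + 1) - c * u k)
    (N : ℕ) : u (N + 2) = x ^ N * u 2 - c * ∑ j ∈ Finset.Icc 1 N, x ^ (N - j) * u j := by
  induction N with
  | zero => simp
  | succ N ih =>
    have hshift : ∑ j ∈ Finset.Icc 1 N, x ^ (N + 1 - j) * u j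
        = x * ∑ j ∈ Finset.Icc 1 N, x ^ (N - j) * u j := by
      rw [Finset.mul_sum]
      refine Finset.sum_congr rfl fun j hj => ?_
      rw [Nat.sub_add_comm (Finset.mem_Icc.mp hj).2, pow_succ]
      ring
    rw [hu, Finset.sum_Icc_succ_top (Nat.le_add_left 1 N), hshift, ih, Nat.sub_self]
    ring

end TwoTermRecurrence

section Horadam

variable {R : Type*} [CommRing R] {p q : R} {W V : ℕ → R}

theorem horadam_add_two_mul (hW : ∀ n : ℕ, W (n + 2) = p * W (n + 1) + q * W n)
    (hV0 : V 0 = 2) (hV1 : V 1 = p) (hV : ∀ n : ℕ, V (n + 2) = p * V (n + 1) + q * V n)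
    (i m : ℕ) : W (m + 2 * i) = V i * W (m + i) - (-q) ^ i * W m := by
  induction i using Nat.twoStepInduction generalizing m with
  | zero => simp only [hV0]; ring_nf
  | one => simp only [hV1, hW]; ring
  | more i ih ih_succ =>
    -- the identity at `i + 2` is `p` times the one at `i + 1` (shifted by 1) plus `q` times the one at `i` (shifted by 2)
    linear_combination (norm := ring_nf) hW (m + 2 * i + 2) + p * ih_succ (m + 1)
      + q * ih (m + 2) - W (m + i + 2) * hV i - q * (-q) ^ i * hW m

end Horadam

theorem horadam_sum_general (p q : ℤ) (W V : ℕ → ℤ)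
    (hW : ∀ n : ℕ, W (n + 2) = p * W (n + 1) + q * W n)
    (hV0 : V 0 = 2) (hV1 : V 1 = p)
    (hV : ∀ n : ℕ, V (n + 2) = p * V (n + 1) + q * V n)
    (n i : ℕ) (hn : 2 ≤ n) :
    W (n * i + i) = V i ^ (n - 1) * W (2 * i) -
      (-q) ^ i * ∑ j ∈ Finset.Icc 1 (n - 1), V i ^ (n - 1 - j) * W (i * j) := by
  have hstep (k : ℕ) : W (i * (k + 2)) = V i * W (i * (k + 1)) - (-q) ^ i * W (i * k) := by
    convert horadam_add_two_mul hW hV0 hV1 hV i (i * k) using 2 <;> ring_nf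
  obtain ⟨N, rfl⟩ : ∃ N, n = N + 1 := ⟨n - 1, by omega⟩
  rw [Nat.add_sub_cancel]
  convert eq_pow_mul_sub_sum_of_recurrence (u := fun k => W (i * k)) hstep N using 3 <;> ring_nf

/-- Horadam sequence: W_{ni+i} = V_i^{n−1} · W_{2i} − (−q)^i · Σ_{j=1}^{n−1} V_i^{n−1−j} · W_{ij}. -/
theorem horadam_sum (a b p q : ℤ) (W V : ℕ → ℤ)
    (hW0 : W 0 = a) (hW1 : W 1 = b)
    (hW : ∀ n : ℕ, W (n + 2) = p * W (n + 1) + q * W n)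
    (hV0 : V 0 = 2) (hV1 : V 1 = p)
    (hV : ∀ n : ℕ, V (n + 2) = p * V (n + 1) + q * V n)
    (n i : ℕ) (hn : 2 ≤ n) (hi : 1 ≤ i) :
    W (n * i + i) = V i ^ (n - 1) * W (2 * i) -
      (-q) ^ i * ∑ j ∈ Finset.Icc 1 (n - 1), V i ^ (n - 1 - j) * W (i * j) :=
  horadam_sum_general p q W V hW hV0 hV1 hV n i hn
end

section
/- For all integers n ≥ 2 and i ≥ 1, the generalized Fibonacci sequence satisfies U_{ni+i} = V_i^{n−1} · U_{2i} − (−q)^i · Σ_{j=1}^{n−1} V_i^{n−1−j} · U_{ij}, where V is the generalized Lucas sequence with the same parameters p, q. -/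
/-!
Set `c = (-q)^i`. The addition formula, d'Ocagne's identity and `V i = 2 U (i+1) - p U i` combine to
`U (2i + k) = V i · U (i + k) - c · U k`. Taking `k = n i`, the sequence `x n = U (n i + i)` satisfies
the first-order recurrence `x (n+1) = V i · x n - c · U (n i)`, and unrolling it from `x 1 = U (2i)`
gives the sum.
-/

open Finset

theorem succ_eq_pow_mul_add_sum_Icc {R : Type*} [CommSemiring R] {x b : ℕ → R} {w : R}
    (h : ∀ n, x (n + 1) = w * x n + b n) (n : ℕ) :
    x (n + 1) = w ^ n * x 1 + ∑ j ∈ Icc 1 n, w ^ (n - j) * b j := by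
  induction n with
  | zero => simp
  | succ n ih =>
    have hsum : ∑ j ∈ Icc 1 n, w ^ (n + 1 - j) * b j = w * ∑ j ∈ Icc 1 n, w ^ (n - j) * b j := by
      rw [mul_sum]
      refine sum_congr rfl fun j hj => ?_
      rw [show n + 1 - j = n - j + 1 by grind, pow_succ]
      ring
    rw [h, ih, sum_Icc_succ_top (by omega), hsum, Nat.sub_self]
    ring

section LucasSequence

variable {R : Type*} [CommRing R] {p q : R} {U V : ℕ → R}

theorem lucasU_add (hU0 : U 0 = 0) (hU1 : U 1 = 1)
    (hU : ∀ n, U (n + 2) = p * U (n + 1) + q * U n) (m n : ℕ) :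
    U (m + n) = U m * U (n + 1) + U (m + 1) * U n - p * U m * U n := by
  induction m generalizing n with
  | zero => simp [hU0, hU1]
  | succ m ih =>
    rw [show m + 1 + n = m + (n + 1) by ring, ih, hU n, hU m]
    ring

theorem lucasU_dOcagne (hU0 : U 0 = 0) (hU1 : U 1 = 1)
    (hU : ∀ n, U (n + 2) = p * U (n + 1) + q * U n) (t k : ℕ) :
    U (t + 1) * U (t + k) - U t * U (t + k + 1) = (-q) ^ t * U k := by
  induction t with
  | zero => simp [hU0, hU1]
  | succ t ih =>
    rw [show t + 1 + k = t + k + 1 by ring, hU t, hU (t + k), pow_succ]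
    linear_combination (-q) * ih

theorem lucasV_eq_two_mul_sub (hU0 : U 0 = 0) (hU1 : U 1 = 1)
    (hU : ∀ n, U (n + 2) = p * U (n + 1) + q * U n)
    (hV0 : V 0 = 2) (hV1 : V 1 = p) (hV : ∀ n, V (n + 2) = p * V (n + 1) + q * V n) (n : ℕ) :
    V n = 2 * U (n + 1) - p * U n := by
  induction n using Nat.twoStepInduction with
  | zero => simp [hV0, hU0, hU1]
  | one => simp [hV1, hU 0, hU0, hU1]; ring
  | more n ih0 ih1 =>
    rw [hV, ih0, ih1, hU (n + 1), hU n]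
    ring

theorem lucasU_two_mul_add (hU0 : U 0 = 0) (hU1 : U 1 = 1)
    (hU : ∀ n, U (n + 2) = p * U (n + 1) + q * U n)
    (hV0 : V 0 = 2) (hV1 : V 1 = p) (hV : ∀ n, V (n + 2) = p * V (n + 1) + q * V n) (i k : ℕ) :
    U (2 * i + k) = V i * U (i + k) - (-q) ^ i * U k := by
  rw [two_mul, add_assoc, lucasU_add hU0 hU1 hU, lucasV_eq_two_mul_sub hU0 hU1 hU hV0 hV1 hV,
    ← lucasU_dOcagne hU0 hU1 hU]
  ring

end LucasSequence

theorem genFib_sum_general (p q : ℤ) (U V : ℕ → ℤ)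
    (hU0 : U 0 = 0) (hU1 : U 1 = 1)
    (hU : ∀ n : ℕ, U (n + 2) = p * U (n + 1) + q * U n)
    (hV0 : V 0 = 2) (hV1 : V 1 = p)
    (hV : ∀ n : ℕ, V (n + 2) = p * V (n + 1) + q * V n)
    (n i : ℕ) (hn : 2 ≤ n) :
    U (n * i + i) = V i ^ (n - 1) * U (2 * i) -
      (-q) ^ i * ∑ j ∈ Finset.Icc 1 (n - 1), V i ^ (n - 1 - j) * U (i * j) := by
  have step : ∀ m, U ((m + 1) * i + i) = V i * U (m * i + i) + -(-q) ^ i * U (i * m) := fun m => by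
    rw [show (m + 1) * i + i = 2 * i + m * i by ring, lucasU_two_mul_add hU0 hU1 hU hV0 hV1 hV,
      add_comm i, mul_comm i]
    ring
  obtain ⟨m, rfl⟩ : ∃ m, n = m + 1 := ⟨n - 1, by omega⟩
  rw [succ_eq_pow_mul_add_sum_Icc (x := fun m => U (m * i + i)) step, mul_sum]
  simp only [Nat.add_sub_cancel, one_mul, two_mul]
  rw [sub_eq_add_neg, ← sum_neg_distrib]
  congr 1
  exact sum_congr rfl fun j _ => by ring

/-- Generalized Fibonacci: U_{ni+i} = V_i^{n−1} · U_{2i} − (−q)^i · Σ_{j=1}^{n−1} V_i^{n−1−j} · U_{ij}. -/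
theorem genFib_sum (p q : ℤ) (U V : ℕ → ℤ)
    (hU0 : U 0 = 0) (hU1 : U 1 = 1)
    (hU : ∀ n : ℕ, U (n + 2) = p * U (n + 1) + q * U n)
    (hV0 : V 0 = 2) (hV1 : V 1 = p)
    (hV : ∀ n : ℕ, V (n + 2) = p * V (n + 1) + q * V n)
    (n i : ℕ) (hn : 2 ≤ n) (hi : 1 ≤ i) :
    U (n * i + i) = V i ^ (n - 1) * U (2 * i) -
      (-q) ^ i * ∑ j ∈ Finset.Icc 1 (n - 1), V i ^ (n - 1 - j) * U (i * j) :=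
  genFib_sum_general p q U V hU0 hU1 hU hV0 hV1 hV n i hn
end

section
/- For all integers n ≥ 2 and i ≥ 1, the Fibonacci numbers satisfy F_{ni+i} = L_i^{n−1} · F_{2i} − (−1)^i · Σ_{j=1}^{n−1} L_i^{n−1−j} · F_{ij}, where L denotes the Lucas numbers. -/
/-!
For every solution `x` of the Fibonacci recurrence, `x (m + 2k) = L k * x (m + k) - (-1)^k * x m`:
on the basis `φ^m, ψ^m` of solutions this is `L k = φ^k + ψ^k` and `(-1)^k = (φψ)^k`.
With `k = i` and `m = (s + 1) i` it becomes the first-order recurrence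
`y (s + 1) = L i * y s - (-1)^i * F (i (s + 1))` for `y s = F (s i + 2 i)`, and unrolling it gives the sum.
-/

open Finset

theorem eq_pow_mul_add_sum_of_succ {R : Type*} [CommSemiring R] {y z : ℕ → R} {c : R}
    (h : ∀ s, y (s + 1) = c * y s + z (s + 1)) (s : ℕ) :
    y s = c ^ s * y 0 + ∑ j ∈ Icc 1 s, c ^ (s - j) * z j := by
  induction s with
  | zero => simp
  | succ s ih =>
    have hpow : ∀ j ∈ Icc 1 s, c * (c ^ (s - j) * z j) = c ^ (s + 1 - j) * z j := fun j hj => by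
      rw [Nat.sub_add_comm (mem_Icc.mp hj).2, pow_succ]
      ring
    rw [h, ih, sum_Icc_succ_top (Nat.le_add_left 1 s), mul_add, mul_sum, sum_congr rfl hpow]
    simp only [Nat.sub_self, pow_zero, one_mul, pow_succ]
    ring

theorem add_two_mul_eq_lucas_mul_sub {R : Type*} [CommRing R] {x L : ℕ → R}
    (hx : ∀ n, x (n + 2) = x (n + 1) + x n)
    (hL0 : L 0 = 2) (hL1 : L 1 = 1) (hL : ∀ n, L (n + 2) = L (n + 1) + L n) (k m : ℕ) :
    x (m + 2 * k) = L k * x (m + k) - (-1) ^ k * x m := by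
  induction k using Nat.twoStepInduction generalizing m with
  | zero =>
    simp only [mul_zero, add_zero, pow_zero, hL0]
    ring
  | one => simp [hL1, hx]
  | more k ih₀ ih₁ =>
    linear_combination (norm := ring_nf) hx (m + 2 * k + 2) + ih₁ (m + 1) + ih₀ (m + 2)
      -x (m + k + 2) * hL k - (-1) ^ k * hx m

theorem fib_sum_general (F L : ℕ → ℤ)
    (hF : ∀ n : ℕ, F (n + 2) = F (n + 1) + F n)
    (hL0 : L 0 = 2) (hL1 : L 1 = 1)
    (hL : ∀ n : ℕ, L (n + 2) = L (n + 1) + L n)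
    (n i : ℕ) (hn : 2 ≤ n) :
    F (n * i + i) = L i ^ (n - 1) * F (2 * i) -
      (-1 : ℤ) ^ i * ∑ j ∈ Finset.Icc 1 (n - 1), L i ^ (n - 1 - j) * F (i * j) := by
  obtain ⟨s, rfl⟩ : ∃ s, n = s + 1 := ⟨n - 1, by omega⟩
  have step : ∀ s, F ((s + 1) * i + 2 * i) =
      L i * F (s * i + 2 * i) + -(-1) ^ i * F (i * (s + 1)) := fun s => by
    linear_combination (norm := ring_nf) add_two_mul_eq_lucas_mul_sub hF hL0 hL1 hL i (s * i + i)
  rw [show (s + 1) * i + i = s * i + 2 * i by ring,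
    eq_pow_mul_add_sum_of_succ (y := fun s => F (s * i + 2 * i))
      (z := fun j => -(-1) ^ i * F (i * j)) step s,
    Nat.add_sub_cancel, zero_mul, zero_add, mul_sum, sub_eq_add_neg, ← sum_neg_distrib]
  exact congrArg _ (sum_congr rfl fun j _ => by ring)

/-- Fibonacci: F_{ni+i} = L_i^{n−1} · F_{2i} − (−1)^i · Σ_{j=1}^{n−1} L_i^{n−1−j} · F_{ij}. -/
theorem fib_sum (F L : ℕ → ℤ)
    (hF0 : F 0 = 0) (hF1 : F 1 = 1)
    (hF : ∀ n : ℕ, F (n + 2) = F (n + 1) + F n)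
    (hL0 : L 0 = 2) (hL1 : L 1 = 1)
    (hL : ∀ n : ℕ, L (n + 2) = L (n + 1) + L n)
    (n i : ℕ) (hn : 2 ≤ n) (hi : 1 ≤ i) :
    F (n * i + i) = L i ^ (n - 1) * F (2 * i) -
      (-1 : ℤ) ^ i * ∑ j ∈ Finset.Icc 1 (n - 1), L i ^ (n - 1 - j) * F (i * j) :=
  fib_sum_general F L hF hL0 hL1 hL n i hn
end

section
/- For all integers n ≥ 2 and i ≥ 1, the Lucas numbers satisfy L_{ni+i} = L_i^{n−1} · L_{2i} − (−1)^i · Σ_{j=1}^{n−1} L_i^{n−1−j} · L_{ij}. -/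
/-!
Put `a j = L (i * j)`. The addition formula `L (m + 2k) = L k * L (m + k) - (-1)^k * L m`
(itself a consequence of Cassini's identity) says that `a` satisfies the second order recurrence
`a (j + 2) = L i * a (j + 1) - (-1)^i * a j`, and unrolling any such recurrence down to `a 2`
gives the stated sum.
-/

open Finset

theorem eq_pow_mul_sub_sum_of_recurrence_s5 {R : Type*} [CommRing R] {a : ℕ → R} {c q : R}
    (h : ∀ j, a (j + 2) = c * a (j + 1) - q * a j) (m : ℕ) :
    a (m + 2) = c ^ m * a 2 - q * ∑ j ∈ Icc 1 m, c ^ (m - j) * a j := by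
  induction m with
  | zero => simp
  | succ m ih =>
    have hsum : ∑ j ∈ Icc 1 (m + 1), c ^ (m + 1 - j) * a j
        = c * ∑ j ∈ Icc 1 m, c ^ (m - j) * a j + a (m + 1) := by
      rw [sum_Icc_succ_top (by omega), Nat.sub_self, pow_zero, one_mul, mul_sum]
      congr 1
      refine sum_congr rfl fun j hj => ?_
      rw [Nat.sub_add_comm (mem_Icc.mp hj).2, pow_succ]
      ring
    rw [h, ih, hsum]
    ring

def lucas : ℕ → ℤ
  | 0 => 2
  | 1 => 1
  | n + 2 => lucas (n + 1) + lucas n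

namespace lucas

theorem zero : lucas 0 = 2 := rfl

theorem one : lucas 1 = 1 := rfl

theorem add_two (n : ℕ) : lucas (n + 2) = lucas (n + 1) + lucas n := rfl

theorem eq_of_recurrence {L : ℕ → ℤ} (hL0 : L 0 = 2) (hL1 : L 1 = 1)
    (hL : ∀ n, L (n + 2) = L (n + 1) + L n) : L = lucas := by
  funext n
  induction n using Nat.twoStepInduction with
  | zero => exact hL0
  | one => exact hL1
  | more n ih₀ ih₁ => rw [hL, ih₀, ih₁, add_two]

theorem cassini (k : ℕ) : lucas (k + 2) * lucas k - lucas (k + 1) ^ 2 = 5 * (-1) ^ k := by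
  induction k with
  | zero => rfl
  | succ k ih =>
    rw [add_two (k + 1), add_two k, pow_succ] at *
    linear_combination -ih

theorem two_mul_and_two_mul_add_one (k : ℕ) :
    lucas (2 * k) = lucas k ^ 2 - 2 * (-1) ^ k ∧
      lucas (2 * k + 1) = lucas k * lucas (k + 1) - (-1) ^ k := by
  induction k with
  | zero => exact ⟨rfl, rfl⟩
  | succ k ih =>
    obtain ⟨hev, hodd⟩ := ih
    have hC := cassini k
    have hev' : lucas (2 * (k + 1)) = lucas (2 * k + 1) + lucas (2 * k) := add_two (2 * k)
    have hodd' : lucas (2 * (k + 1) + 1) = lucas (2 * (k + 1)) + lucas (2 * k + 1) :=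
      add_two (2 * k + 1)
    rw [add_two k] at hC ⊢
    rw [hev', hev, hodd] at hodd' ⊢
    rw [hodd', pow_succ]
    exact ⟨by linear_combination hC, by linear_combination hC⟩

theorem add_two_mul (k m : ℕ) :
    lucas (m + 2 * k) = lucas k * lucas (m + k) - (-1) ^ k * lucas m := by
  induction m using Nat.twoStepInduction with
  | zero =>
    rw [zero_add, zero_add, (two_mul_and_two_mul_add_one k).1, zero]
    ring
  | one =>
    rw [add_comm 1, add_comm 1, (two_mul_and_two_mul_add_one k).2, one]
    ring
  | more m ih₀ ih₁ =>
    rw [show m + 2 + 2 * k = m + 2 * k + 2 by ring, show m + 2 + k = m + k + 2 by ring,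
      add_two, add_two, add_two, show m + 2 * k + 1 = m + 1 + 2 * k by ring,
      show m + k + 1 = m + 1 + k by ring, ih₀, ih₁]
    ring

theorem mul_add_two (i j : ℕ) :
    lucas (i * (j + 2)) = lucas i * lucas (i * (j + 1)) - (-1) ^ i * lucas (i * j) := by
  rw [show i * (j + 2) = i * j + 2 * i by ring, show i * (j + 1) = i * j + i by ring,
    add_two_mul]

end lucas

theorem lucas_sum_general (L : ℕ → ℤ)
    (hL0 : L 0 = 2) (hL1 : L 1 = 1)
    (hL : ∀ n : ℕ, L (n + 2) = L (n + 1) + L n)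
    (n i : ℕ) (hn : 2 ≤ n) :
    L (n * i + i) = L i ^ (n - 1) * L (2 * i) -
      (-1 : ℤ) ^ i * ∑ j ∈ Finset.Icc 1 (n - 1), L i ^ (n - 1 - j) * L (i * j) := by
  obtain rfl := lucas.eq_of_recurrence hL0 hL1 hL
  obtain ⟨m, rfl⟩ : ∃ m, n = m + 1 := ⟨n - 1, by omega⟩
  have h := eq_pow_mul_sub_sum_of_recurrence_s5 (a := fun j => lucas (i * j)) (lucas.mul_add_two i) m
  rw [Nat.add_sub_cancel, show (m + 1) * i + i = i * (m + 2) by ring, mul_comm 2 i]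
  exact h

/-- Lucas: L_{ni+i} = L_i^{n−1} · L_{2i} − (−1)^i · Σ_{j=1}^{n−1} L_i^{n−1−j} · L_{ij}. -/
theorem lucas_sum (L : ℕ → ℤ)
    (hL0 : L 0 = 2) (hL1 : L 1 = 1)
    (hL : ∀ n : ℕ, L (n + 2) = L (n + 1) + L n)
    (n i : ℕ) (hn : 2 ≤ n) (hi : 1 ≤ i) :
    L (n * i + i) = L i ^ (n - 1) * L (2 * i) -
      (-1 : ℤ) ^ i * ∑ j ∈ Finset.Icc 1 (n - 1), L i ^ (n - 1 - j) * L (i * j) :=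
  lucas_sum_general L hL0 hL1 hL n i hn
end

section
/- For all integers n ≥ 2 and i ≥ 1, the Pell–Lucas numbers satisfy Q_{ni+i} = Q_i^{n−1} · Q_{2i} − (−1)^i · Σ_{j=1}^{n−1} Q_i^{n−1−j} · Q_{ij}. -/
/-! The subsequence `a j = Q (i * j)` satisfies the second-order recurrence
`a (j + 2) = Q i * a (j + 1) - (-1) ^ i * a j`, an instance of the classical identity
`x (k + 2i) = V i * x (k + i) - (-q) ^ i * x k` relating any solution `x` of
`x (n + 2) = p x (n + 1) + q x n` to the Lucas sequence `V` of the same recurrence.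
Unrolling the recurrence for `a` from `a 2` gives the formula. -/

open Finset

section LinearRecurrence

variable {R : Type*} [CommRing R]

theorem add_two_mul_eq_lucas_mul_sub_s7 {p q : R} {V x : ℕ → R}
    (hV0 : V 0 = 2) (hV1 : V 1 = p) (hV : ∀ n, V (n + 2) = p * V (n + 1) + q * V n)
    (hx : ∀ n, x (n + 2) = p * x (n + 1) + q * x n) (i : ℕ) :
    ∀ k, x (k + 2 * i) = V i * x (k + i) - (-q) ^ i * x k := by
  induction i using Nat.twoStepInduction with
  | zero => intro k; simp only [mul_zero, add_zero, hV0, pow_zero]; ring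
  | one => intro k; rw [hx, hV1]; ring
  | more i ih ih' =>
    intro k
    have h := ih (k + 2)
    have h' := ih' (k + 1)
    rw [show k + 2 + 2 * i = k + 2 * i + 2 by ring, show k + 2 + i = k + (i + 2) by ring] at h
    rw [show k + 1 + 2 * (i + 1) = k + 2 * i + 3 by ring,
      show k + 1 + (i + 1) = k + (i + 2) by ring] at h'
    rw [show k + 2 * (i + 2) = k + 2 * i + 2 + 2 by ring, hx (k + 2 * i + 2), hV i,
      show k + 2 * i + 2 + 1 = k + 2 * i + 3 by ring]
    linear_combination p * h' + q * h - (-q) ^ i * q * hx k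

theorem add_two_eq_pow_mul_sub_sum {c d : R} {a : ℕ → R}
    (ha : ∀ m, a (m + 2) = c * a (m + 1) - d * a m) (m : ℕ) :
    a (m + 2) = c ^ m * a 2 - d * ∑ j ∈ Icc 1 m, c ^ (m - j) * a j := by
  induction m with
  | zero => simp
  | succ m ih =>
    have hsum : ∑ j ∈ Icc 1 (m + 1), c ^ (m + 1 - j) * a j
        = c * ∑ j ∈ Icc 1 m, c ^ (m - j) * a j + a (m + 1) := by
      rw [sum_Icc_succ_top (by omega), Nat.sub_self, pow_zero, one_mul, mul_sum]
      congr 1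
      refine sum_congr rfl fun j hj => ?_
      rw [Nat.sub_add_comm (mem_Icc.mp hj).2, pow_succ]
      ring
    rw [ha, ih, hsum]
    ring

end LinearRecurrence

theorem pellLucas_sum_general (Q : ℕ → ℤ)
    (hQ0 : Q 0 = 2) (hQ1 : Q 1 = 2)
    (hQ : ∀ n : ℕ, Q (n + 2) = 2 * Q (n + 1) + Q n)
    (n i : ℕ) (hn : 2 ≤ n) :
    Q (n * i + i) = Q i ^ (n - 1) * Q (2 * i) -
      (-1 : ℤ) ^ i * ∑ j ∈ Finset.Icc 1 (n - 1), Q i ^ (n - 1 - j) * Q (i * j) := by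
  have hQ' : ∀ m, Q (m + 2) = 2 * Q (m + 1) + 1 * Q m := by simpa using hQ
  have hrec : ∀ m, Q (i * (m + 2)) = Q i * Q (i * (m + 1)) - (-1) ^ i * Q (i * m) := by
    intro m
    have h := add_two_mul_eq_lucas_mul_sub_s7 hQ0 hQ1 hQ' hQ' i (i * m)
    rwa [show i * (m + 2) = i * m + 2 * i by ring, show i * (m + 1) = i * m + i by ring]
  have h := add_two_eq_pow_mul_sub_sum (a := fun j => Q (i * j)) hrec (n - 1)
  rwa [show i * (n - 1 + 2) = n * i + i by
      rw [show n - 1 + 2 = n + 1 by omega]; ring, mul_comm i 2] at h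

/-- Pell–Lucas: Q_{ni+i} = Q_i^{n−1} · Q_{2i} − (−1)^i · Σ_{j=1}^{n−1} Q_i^{n−1−j} · Q_{ij}. -/
theorem pellLucas_sum (Q : ℕ → ℤ)
    (hQ0 : Q 0 = 2) (hQ1 : Q 1 = 2)
    (hQ : ∀ n : ℕ, Q (n + 2) = 2 * Q (n + 1) + Q n)
    (n i : ℕ) (hn : 2 ≤ n) (hi : 1 ≤ i) :
    Q (n * i + i) = Q i ^ (n - 1) * Q (2 * i) -
      (-1 : ℤ) ^ i * ∑ j ∈ Finset.Icc 1 (n - 1), Q i ^ (n - 1 - j) * Q (i * j) :=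
  pellLucas_sum_general Q hQ0 hQ1 hQ n i hn
end

section
/- For all integers n ≥ 2 and i ≥ 1, the Jacobsthal numbers satisfy J_{ni+i} = j_i^{n−1} · J_{2i} − (−2)^i · Σ_{k=1}^{n−1} j_i^{n−1−k} · J_{ik}, where j denotes the Jacobsthal–Lucas numbers. -/
/-!
Both sequences are explicit: `3 J n = 2 ^ n - (-1) ^ n` and `j n = 2 ^ n + (-1) ^ n`. From these,
`a k := J (i k)` satisfies the second-order recurrence `a (k + 2) = j i * a (k + 1) - (-2) ^ i * a k`,
whose characteristic roots are `2 ^ i` and `(-1) ^ i`. Unrolling any such recurrence down to `a 2`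
produces the stated sum.
-/

theorem three_mul_jacobsthal_eq (J : ℕ → ℤ) (hJ0 : J 0 = 0) (hJ1 : J 1 = 1)
    (hJ : ∀ n : ℕ, J (n + 2) = J (n + 1) + 2 * J n) (n : ℕ) :
    3 * J n = 2 ^ n - (-1) ^ n := by
  induction n using Nat.twoStepInduction with
  | zero => simp [hJ0]
  | one => simp [hJ1]
  | more n ih ih' =>
    calc 3 * J (n + 2) = 2 * (3 * J n) + 3 * J (n + 1) := by rw [hJ]; ring
      _ = 2 ^ (n + 2) - (-1) ^ (n + 2) := by rw [ih, ih']; ring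

theorem jacobsthalLucas_eq (jl : ℕ → ℤ) (hj0 : jl 0 = 2) (hj1 : jl 1 = 1)
    (hj : ∀ n : ℕ, jl (n + 2) = jl (n + 1) + 2 * jl n) (n : ℕ) :
    jl n = 2 ^ n + (-1) ^ n := by
  induction n using Nat.twoStepInduction with
  | zero => simp [hj0]
  | one => simp [hj1]
  | more n ih ih' => rw [hj, ih, ih']; ring

theorem jacobsthal_add_add (J jl : ℕ → ℤ) (hJ0 : J 0 = 0) (hJ1 : J 1 = 1)
    (hJ : ∀ n : ℕ, J (n + 2) = J (n + 1) + 2 * J n)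
    (hj0 : jl 0 = 2) (hj1 : jl 1 = 1)
    (hj : ∀ n : ℕ, jl (n + 2) = jl (n + 1) + 2 * jl n) (m i : ℕ) :
    J (m + i + i) = jl i * J (m + i) - (-2) ^ i * J m := by
  have hJ3 := three_mul_jacobsthal_eq J hJ0 hJ1 hJ
  refine mul_left_cancel₀ (three_ne_zero' ℤ) ?_
  calc 3 * J (m + i + i) = 2 ^ (m + i + i) - (-1) ^ (m + i + i) := hJ3 _
    _ = (2 ^ i + (-1) ^ i) * (2 ^ (m + i) - (-1) ^ (m + i))
          - (-1) ^ i * 2 ^ i * (2 ^ m - (-1) ^ m) := by ring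
    _ = 3 * (jl i * J (m + i) - (-2) ^ i * J m) := by
      rw [jacobsthalLucas_eq jl hj0 hj1 hj, neg_pow 2 i]
      linear_combination (-(2 ^ i + (-1) ^ i) : ℤ) * hJ3 (m + i) + (-1) ^ i * 2 ^ i * hJ3 m

theorem add_two_eq_pow_mul_sub_sum_of_recurrence {R : Type*} [CommRing R] (a : ℕ → R) (c d : R)
    (ha : ∀ k, a (k + 2) = c * a (k + 1) - d * a k) (n : ℕ) :
    a (n + 2) = c ^ n * a 2 - d * ∑ k ∈ Finset.Icc 1 n, c ^ (n - k) * a k := by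
  induction n with
  | zero => simp
  | succ n ih =>
    have hsum : ∑ k ∈ Finset.Icc 1 (n + 1), c ^ (n + 1 - k) * a k
        = c * ∑ k ∈ Finset.Icc 1 n, c ^ (n - k) * a k + a (n + 1) := by
      rw [Finset.sum_Icc_succ_top (by omega), Nat.sub_self, pow_zero, one_mul, Finset.mul_sum]
      congr 1
      refine Finset.sum_congr rfl fun k hk => ?_
      rw [Nat.sub_add_comm (Finset.mem_Icc.mp hk).2, pow_succ]
      ring
    rw [ha, ih, hsum]
    ring

theorem jacobsthal_sum_general (J jl : ℕ → ℤ)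
    (hJ0 : J 0 = 0) (hJ1 : J 1 = 1)
    (hJ : ∀ n : ℕ, J (n + 2) = J (n + 1) + 2 * J n)
    (hj0 : jl 0 = 2) (hj1 : jl 1 = 1)
    (hj : ∀ n : ℕ, jl (n + 2) = jl (n + 1) + 2 * jl n)
    (n i : ℕ) (hn : 2 ≤ n) :
    J (n * i + i) = jl i ^ (n - 1) * J (2 * i) -
      (-2 : ℤ) ^ i * ∑ k ∈ Finset.Icc 1 (n - 1), jl i ^ (n - 1 - k) * J (i * k) := by
  obtain ⟨m, rfl⟩ : ∃ m, n = m + 1 := ⟨n - 1, by omega⟩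
  have hrec : ∀ k, J (i * (k + 2)) = jl i * J (i * (k + 1)) - (-2) ^ i * J (i * k) := fun k => by
    rw [show i * (k + 2) = i * k + i + i by ring, show i * (k + 1) = i * k + i by ring]
    exact jacobsthal_add_add J jl hJ0 hJ1 hJ hj0 hj1 hj (i * k) i
  rw [Nat.add_sub_cancel, show (m + 1) * i + i = i * (m + 2) by ring, mul_comm 2 i]
  exact add_two_eq_pow_mul_sub_sum_of_recurrence (fun k => J (i * k)) _ _ hrec m

/-- Jacobsthal: J_{ni+i} = j_i^{n−1} · J_{2i} − (−2)^i · Σ_{k=1}^{n−1} j_i^{n−1−k} · J_{ik}. -/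
theorem jacobsthal_sum (J jl : ℕ → ℤ)
    (hJ0 : J 0 = 0) (hJ1 : J 1 = 1)
    (hJ : ∀ n : ℕ, J (n + 2) = J (n + 1) + 2 * J n)
    (hj0 : jl 0 = 2) (hj1 : jl 1 = 1)
    (hj : ∀ n : ℕ, jl (n + 2) = jl (n + 1) + 2 * jl n)
    (n i : ℕ) (hn : 2 ≤ n) (hi : 1 ≤ i) :
    J (n * i + i) = jl i ^ (n - 1) * J (2 * i) -
      (-2 : ℤ) ^ i * ∑ k ∈ Finset.Icc 1 (n - 1), jl i ^ (n - 1 - k) * J (i * k) :=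
  jacobsthal_sum_general J jl hJ0 hJ1 hJ hj0 hj1 hj n i hn
end

section
/- For all integers n ≥ 2 and i ≥ 1, the Jacobsthal–Lucas numbers satisfy j_{ni+i} = j_i^{n−1} · j_{2i} − (−2)^i · Σ_{k=1}^{n−1} j_i^{n−1−k} · j_{ik}. -/
/-! Since `j_m = 2^m + (-1)^m`, one has `j_{a+2b} = j_b j_{a+b} - (-2)^b j_a`: the subsequence
`k ↦ j_{ik}` satisfies a second-order recurrence with coefficients `j_i` and `(-2)^i`, and
unrolling such a recurrence down to its second term produces the sum. -/

open Finset

theorem eq_pow_mul_sub_mul_sum_of_recurrence {R : Type*} [CommRing R] {s : ℕ → R} {c d : R}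
    (hs : ∀ k, s (k + 2) = c * s (k + 1) - d * s k) (n : ℕ) :
    s (n + 2) = c ^ n * s 2 - d * ∑ k ∈ Icc 1 n, c ^ (n - k) * s k := by
  induction n with
  | zero => simp
  | succ n ih =>
    have hsum : ∑ k ∈ Icc 1 (n + 1), c ^ (n + 1 - k) * s k
        = c * ∑ k ∈ Icc 1 n, c ^ (n - k) * s k + s (n + 1) := by
      rw [sum_Icc_succ_top (by omega), mul_sum, Nat.sub_self, pow_zero, one_mul]
      congr 1
      refine sum_congr rfl fun k hk => ?_
      rw [Nat.sub_add_comm (mem_Icc.mp hk).2, pow_succ]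
      ring
    rw [hs, ih, hsum]
    ring

theorem jacobsthalLucas_eq_two_pow_add_neg_one_pow {jl : ℕ → ℤ} (hj0 : jl 0 = 2) (hj1 : jl 1 = 1)
    (hj : ∀ n : ℕ, jl (n + 2) = jl (n + 1) + 2 * jl n) (m : ℕ) : jl m = 2 ^ m + (-1) ^ m := by
  induction m using Nat.twoStepInduction with
  | zero => simpa using hj0
  | one => simpa using hj1
  | more m ih1 ih2 => rw [hj, ih1, ih2]; ring

theorem jacobsthalLucas_add_two_mul {jl : ℕ → ℤ} (hj0 : jl 0 = 2) (hj1 : jl 1 = 1)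
    (hj : ∀ n : ℕ, jl (n + 2) = jl (n + 1) + 2 * jl n) (a b : ℕ) :
    jl (a + 2 * b) = jl b * jl (a + b) - (-2) ^ b * jl a := by
  simp only [jacobsthalLucas_eq_two_pow_add_neg_one_pow hj0 hj1 hj, neg_pow (2 : ℤ) b]
  ring

theorem jacobsthalLucas_sum_general (jl : ℕ → ℤ)
    (hj0 : jl 0 = 2) (hj1 : jl 1 = 1)
    (hj : ∀ n : ℕ, jl (n + 2) = jl (n + 1) + 2 * jl n)
    (n i : ℕ) (hn : 2 ≤ n) :
    jl (n * i + i) = jl i ^ (n - 1) * jl (2 * i) -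
      (-2 : ℤ) ^ i * ∑ k ∈ Finset.Icc 1 (n - 1), jl i ^ (n - 1 - k) * jl (i * k) := by
  obtain ⟨m, rfl⟩ : ∃ m, n = m + 1 := ⟨n - 1, by omega⟩
  have hrec : ∀ k, jl (i * (k + 2)) = jl i * jl (i * (k + 1)) - (-2) ^ i * jl (i * k) := by
    intro k
    rw [show i * (k + 2) = i * k + 2 * i by ring, show i * (k + 1) = i * k + i by ring]
    exact jacobsthalLucas_add_two_mul hj0 hj1 hj (i * k) i
  have h := eq_pow_mul_sub_mul_sum_of_recurrence (s := fun k => jl (i * k)) hrec m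
  rw [mul_comm i 2] at h
  rw [Nat.add_sub_cancel, ← h]
  congr 1
  ring

/-- Jacobsthal–Lucas: j_{ni+i} = j_i^{n−1} · j_{2i} − (−2)^i · Σ_{k=1}^{n−1} j_i^{n−1−k} · j_{ik}. -/
theorem jacobsthalLucas_sum (jl : ℕ → ℤ)
    (hj0 : jl 0 = 2) (hj1 : jl 1 = 1)
    (hj : ∀ n : ℕ, jl (n + 2) = jl (n + 1) + 2 * jl n)
    (n i : ℕ) (hn : 2 ≤ n) (hi : 1 ≤ i) :
    jl (n * i + i) = jl i ^ (n - 1) * jl (2 * i) -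
      (-2 : ℤ) ^ i * ∑ k ∈ Finset.Icc 1 (n - 1), jl i ^ (n - 1 - k) * jl (i * k) :=
  jacobsthalLucas_sum_general jl hj0 hj1 hj n i hn
end

section
/- For all integers n ≥ 2 and even i ≥ 2, the Horadam sequence satisfies W_{ni+i} = Σ_{j=0}^{⌊n/2⌋} C(n−j, j) · (−1)^j · V_i^{n−2j} · q^{ij} · W_i − q^i · a · Σ_{j=0}^{⌊(n−1)/2⌋} C(n−j−1, j) · (−1)^j · V_i^{n−2j−1} · q^{ij}, where V is the generalized Lucas sequence with the same parameters p, q and C(m,k) denotes the binomial coefficient. -/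
/-!
The identity `V i * W (m + i) = W (m + 2 * i) + (-q) ^ i * W m` shows that for even `i` the
subsequence `m ↦ W (m * i)` again satisfies a Horadam recurrence, now with parameters `V i` and
`-q ^ i`. Every solution of `x (m + 2) = P * x (m + 1) + T * x m` is
`x (m + 1) = F (m + 1) * x 1 + T * F m * x 0`, where `F` is the bivariate Fibonacci polynomial
(`F 0 = 0`, `F 1 = 1`), and `F (n + 1) = ∑ j, C(n - j, j) * P ^ (n - 2 j) * T ^ j`, as for `Nat.fib`.
-/

open Finset

variable {R : Type*} [CommRing R]

def IsHoradam (p q : R) (W : ℕ → R) : Prop :=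
  ∀ n, W (n + 2) = p * W (n + 1) + q * W n

def fibPoly (P T : R) : ℕ → R
  | 0 => 0
  | 1 => 1
  | n + 2 => P * fibPoly P T (n + 1) + T * fibPoly P T n

theorem choose_succ_mul_pow_mul_pow (P T : R) (k j : ℕ) :
    ((k + 1).choose (j + 1) : R) * P ^ (k - j) * T ^ (j + 1) =
      P * (k.choose (j + 1) * P ^ (k - (j + 1)) * T ^ (j + 1)) +
        T * (k.choose j * P ^ (k - j) * T ^ j) := by
  rw [Nat.choose_succ_succ', Nat.cast_add]
  rcases lt_or_ge k (j + 1) with h | h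
  · simp [Nat.choose_eq_zero_of_lt h]
    ring
  · rw [show k - j = k - (j + 1) + 1 by omega]
    ring

theorem fibPoly_succ_eq_sum_antidiagonal (P T : R) : ∀ n : ℕ,
    fibPoly P T (n + 1) = ∑ x ∈ antidiagonal n, (x.1.choose x.2 : R) * P ^ (x.1 - x.2) * T ^ x.2 :=
  Nat.twoStepInduction (by simp [fibPoly]) (by simp [fibPoly, Nat.antidiagonal_succ])
    fun n h1 h2 => by
      rw [fibPoly, h1, h2, Nat.antidiagonal_succ_succ', Nat.antidiagonal_succ']
      simp [choose_succ_mul_pow_mul_pow, sum_add_distrib, ← mul_sum]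
      ring

theorem fibPoly_succ_eq_sum_range (P T : R) (n : ℕ) :
    fibPoly P T (n + 1) =
      ∑ j ∈ range (n / 2 + 1), ((n - j).choose j : R) * P ^ (n - 2 * j) * T ^ j := by
  rw [fibPoly_succ_eq_sum_antidiagonal, ← Nat.sum_antidiagonal_swap,
    Nat.sum_antidiagonal_eq_sum_range_succ_mk]
  refine (sum_subset (range_subset_range.2 (by omega)) fun j _ hj => ?_).symm.trans
    (sum_congr rfl fun j _ => ?_)
  · rw [mem_range, not_lt] at hj
    simp [Nat.choose_eq_zero_of_lt (show n - j < j by omega)]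
  · simp [Nat.sub_sub, two_mul]

namespace IsHoradam

variable {p q : R} {W : ℕ → R}

theorem eq_fibPoly (hW : IsHoradam p q W) : ∀ m : ℕ,
    W (m + 1) = fibPoly p q (m + 1) * W 1 + q * fibPoly p q m * W 0 :=
  Nat.twoStepInduction (by simp [fibPoly]) (by simp [fibPoly, hW 0]) fun m h1 h2 => by
    rw [hW (m + 1), h1, h2]
    simp only [fibPoly]
    ring

theorem lucas_mul {V : ℕ → R} (hW : IsHoradam p q W) (hV : IsHoradam p q V)
    (hV0 : V 0 = 2) (hV1 : V 1 = p) : ∀ i m : ℕ,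
    V i * W (m + i) = W (m + 2 * i) + (-q) ^ i * W m :=
  Nat.twoStepInduction (fun m => by simp [hV0]; ring) (fun m => by simp [hV1, hW m])
    fun i h1 h2 m => by
      have e1 := h1 (m + 2)
      have e2 := h2 (m + 1)
      have e3 := hW (m + 2 * i + 2)
      have e4 := hW m
      rw [show m + 2 + i = m + (i + 2) by ring, show m + 2 + 2 * i = m + 2 * i + 2 by ring] at e1
      rw [show m + 1 + (i + 1) = m + (i + 2) by ring,
        show m + 1 + 2 * (i + 1) = m + 2 * i + 2 + 1 by ring] at e2
      rw [hV i, show m + 2 * (i + 2) = m + 2 * i + 2 + 2 by ring]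
      linear_combination p * e2 + q * e1 - e3 + q * (-q) ^ i * e4

theorem comp_mul {V : ℕ → R} (hW : IsHoradam p q W) (hV : IsHoradam p q V)
    (hV0 : V 0 = 2) (hV1 : V 1 = p) (i : ℕ) :
    IsHoradam (V i) (-(-q) ^ i) (fun m => W (m * i)) := fun m => by
  have h := hW.lucas_mul hV hV0 hV1 i (m * i)
  simp only [show (m + 2) * i = m * i + 2 * i by ring, show (m + 1) * i = m * i + i by ring]
  linear_combination -h

end IsHoradam

theorem horadam_binomial_even_general (a p q : ℤ) (W V : ℕ → ℤ)
    (hW0 : W 0 = a)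
    (hW : ∀ n : ℕ, W (n + 2) = p * W (n + 1) + q * W n)
    (hV0 : V 0 = 2) (hV1 : V 1 = p)
    (hV : ∀ n : ℕ, V (n + 2) = p * V (n + 1) + q * V n)
    (n i : ℕ) (hn : 2 ≤ n) (heven : Even i) :
    W (n * i + i) =
      (∑ j ∈ Finset.range (n / 2 + 1),
        ((n - j).choose j : ℤ) * (-1 : ℤ) ^ j * V i ^ (n - 2 * j) * q ^ (i * j) * W i) -
      q ^ i * a * ∑ j ∈ Finset.range ((n - 1) / 2 + 1),
        ((n - j - 1).choose j : ℤ) * (-1 : ℤ) ^ j * V i ^ (n - 2 * j - 1) * q ^ (i * j) := by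
  have hx : IsHoradam (V i) (-q ^ i) (fun m => W (m * i)) := by
    simpa only [heven.neg_pow] using IsHoradam.comp_mul hW hV hV0 hV1 i
  have hF : fibPoly (V i) (-q ^ i) n = fibPoly (V i) (-q ^ i) (n - 1 + 1) := by
    rw [Nat.sub_add_cancel (by omega)]
  have hterm : ∀ (c : ℤ) (e j : ℕ),
      c * V i ^ e * (-q ^ i) ^ j = c * (-1) ^ j * V i ^ e * q ^ (i * j) := fun c e j => by
    rw [neg_pow, pow_mul]
    ring
  rw [show n * i + i = (n + 1) * i by ring, hx.eq_fibPoly n, hF, fibPoly_succ_eq_sum_range,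
    fibPoly_succ_eq_sum_range, ← sum_mul]
  simp only [hterm, one_mul, zero_mul, hW0, Nat.sub_right_comm _ 1]
  ring

/-- Horadam binomial sum, even index i. -/
theorem horadam_binomial_even (a b p q : ℤ) (W V : ℕ → ℤ)
    (hW0 : W 0 = a) (hW1 : W 1 = b)
    (hW : ∀ n : ℕ, W (n + 2) = p * W (n + 1) + q * W n)
    (hV0 : V 0 = 2) (hV1 : V 1 = p)
    (hV : ∀ n : ℕ, V (n + 2) = p * V (n + 1) + q * V n)
    (n i : ℕ) (hn : 2 ≤ n) (hi : 2 ≤ i) (heven : Even i) :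
    W (n * i + i) =
      (∑ j ∈ Finset.range (n / 2 + 1),
        ((n - j).choose j : ℤ) * (-1 : ℤ) ^ j * V i ^ (n - 2 * j) * q ^ (i * j) * W i) -
      q ^ i * a * ∑ j ∈ Finset.range ((n - 1) / 2 + 1),
        ((n - j - 1).choose j : ℤ) * (-1 : ℤ) ^ j * V i ^ (n - 2 * j - 1) * q ^ (i * j) :=
  horadam_binomial_even_general a p q W V hW0 hW hV0 hV1 hV n i hn heven
end

section
/- For all integers n ≥ 2, the Fibonacci numbers satisfy F_{2n+2} = Σ_{j=0}^{⌊n/2⌋} C(n−j, j) · (−1)^j · 3^{n−2j}, where C(m,k) denotes the binomial coefficient. -/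
/-!
The shallow diagonal sums `s n = ∑ⱼ C(n - j, j) bʲ a^(n - 2j)` of Pascal's triangle satisfy
`s (n + 2) = a s (n + 1) + b s n` by Pascal's rule, with `s 0 = 1` and `s 1 = a`. The bisected
Fibonacci sequence `m ↦ F (2m)` satisfies `F (2m + 4) = 3 F (2m + 2) - F (2m)` and starts with
`0, 1`, so `F (2n + 2) = s n` for `a = 3`, `b = -1`.
-/

open Finset

theorem Nat.choose_sub_succ_succ (n j : ℕ) :
    (n + 1 - j).choose (j + 1) = (n - j).choose j + (n - j).choose (j + 1) := by
  rcases le_or_gt j n with hj | hj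
  · rw [Nat.sub_add_comm hj, Nat.choose_succ_succ']
  · simp [Nat.sub_eq_zero_of_le hj.le, Nat.sub_eq_zero_of_le (Nat.succ_le_of_lt hj),
      Nat.choose_eq_zero_of_lt (show 0 < j by omega)]

section ShallowDiagonal

variable {R : Type*} [CommRing R] (a b : R)

def shallowDiagonalTerm (n j : ℕ) : R :=
  ((n - j).choose j : R) * b ^ j * a ^ (n - 2 * j)

def shallowDiagonalSum (n : ℕ) : R :=
  ∑ j ∈ range (n / 2 + 1), shallowDiagonalTerm a b n j

theorem shallowDiagonalTerm_eq_zero {n j : ℕ} (h : n < 2 * j) :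
    shallowDiagonalTerm a b n j = 0 := by
  simp [shallowDiagonalTerm, Nat.choose_eq_zero_of_lt (show n - j < j by omega)]

theorem shallowDiagonalTerm_zero_right (n : ℕ) : shallowDiagonalTerm a b n 0 = a ^ n := by
  simp [shallowDiagonalTerm]

theorem shallowDiagonalSum_eq_sum_range {n N : ℕ} (hN : n / 2 < N) :
    shallowDiagonalSum a b n = ∑ j ∈ range N, shallowDiagonalTerm a b n j := by
  refine sum_subset (fun j hj => ?_) (fun j _ hj => ?_)
  · simp only [mem_range] at hj ⊢
    omega
  · exact shallowDiagonalTerm_eq_zero a b (by simp only [mem_range] at hj; omega)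

theorem shallowDiagonalTerm_add_two_succ (n j : ℕ) :
    shallowDiagonalTerm a b (n + 2) (j + 1) =
      a * shallowDiagonalTerm a b (n + 1) (j + 1) + b * shallowDiagonalTerm a b n j := by
  have hshift : a * ((n - j).choose (j + 1) * a ^ (n - (2 * j + 1)) : R) =
      (n - j).choose (j + 1) * a ^ (n - 2 * j) := by
    rcases le_or_gt (2 * j + 1) n with hj | hj
    · rw [show n - 2 * j = n - (2 * j + 1) + 1 by omega, pow_succ]
      ring
    -- the exponent `n - (2 * j + 1)` is truncated here, but the binomial coefficient vanishes
    · simp [Nat.choose_eq_zero_of_lt (show n - j < j + 1 by omega)]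
  simp only [shallowDiagonalTerm, show n + 2 - (j + 1) = n + 1 - j by omega,
    show n + 1 - (j + 1) = n - j by omega, show n + 2 - 2 * (j + 1) = n - 2 * j by omega,
    show n + 1 - 2 * (j + 1) = n - (2 * j + 1) by omega, Nat.choose_sub_succ_succ]
  push_cast
  linear_combination -b ^ (j + 1) * hshift

theorem shallowDiagonalSum_add_two (n : ℕ) :
    shallowDiagonalSum a b (n + 2) =
      a * shallowDiagonalSum a b (n + 1) + b * shallowDiagonalSum a b n := by
  rw [shallowDiagonalSum_eq_sum_range a b (N := n + 3) (by omega),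
    shallowDiagonalSum_eq_sum_range a b (N := n + 3) (by omega),
    shallowDiagonalSum_eq_sum_range a b (N := n + 2) (by omega),
    sum_range_succ', sum_range_succ' _ (n + 2)]
  simp only [shallowDiagonalTerm_add_two_succ, sum_add_distrib, ← mul_sum,
    shallowDiagonalTerm_zero_right]
  ring

theorem eq_shallowDiagonalSum_of_rec {U : ℕ → R} (h0 : U 0 = 0) (h1 : U 1 = 1)
    (h : ∀ n, U (n + 2) = a * U (n + 1) + b * U n) (n : ℕ) :
    U (n + 1) = shallowDiagonalSum a b n := by
  induction n using Nat.twoStepInduction with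
  | zero => simp [h1, shallowDiagonalSum, shallowDiagonalTerm]
  | one => simp [h, h0, h1, shallowDiagonalSum, shallowDiagonalTerm]
  | more n ih₀ ih₁ => rw [h, ih₀, ih₁, shallowDiagonalSum_add_two]

end ShallowDiagonal

theorem add_four_eq_three_mul_sub_of_fib_rec {R : Type*} [CommRing R] {F : ℕ → R}
    (hF : ∀ n, F (n + 2) = F (n + 1) + F n) (m : ℕ) : F (m + 4) = 3 * F (m + 2) - F m := by
  have h4 : F (m + 4) = F (m + 3) + F (m + 2) := hF (m + 2)
  have h3 : F (m + 3) = F (m + 2) + F (m + 1) := hF (m + 1)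
  linear_combination h4 + h3 - hF m

theorem fib_binomial_even_general (F : ℕ → ℤ)
    (hF0 : F 0 = 0) (hF1 : F 1 = 1)
    (hF : ∀ n : ℕ, F (n + 2) = F (n + 1) + F n)
    (n : ℕ) :
    F (2 * n + 2) = ∑ j ∈ Finset.range (n / 2 + 1),
      ((n - j).choose j : ℤ) * (-1 : ℤ) ^ j * 3 ^ (n - 2 * j) := by
  have hF2 : F (2 * 1) = 1 := by simp [hF 0, hF0, hF1]
  have hbisect (m : ℕ) : F (2 * (m + 2)) = 3 * F (2 * (m + 1)) + -1 * F (2 * m) := by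
    rw [show 2 * (m + 2) = 2 * m + 4 by ring, show 2 * (m + 1) = 2 * m + 2 by ring,
      add_four_eq_three_mul_sub_of_fib_rec hF]
    ring
  exact eq_shallowDiagonalSum_of_rec 3 (-1) (U := fun m => F (2 * m)) hF0 hF2 hbisect n

/-- Fibonacci binomial sum: F_{2n+2} = Σ_{j=0}^{⌊n/2⌋} C(n−j, j) · (−1)^j · 3^{n−2j}. -/
theorem fib_binomial_even (F : ℕ → ℤ)
    (hF0 : F 0 = 0) (hF1 : F 1 = 1)
    (hF : ∀ n : ℕ, F (n + 2) = F (n + 1) + F n)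
    (n : ℕ) (hn : 2 ≤ n) :
    F (2 * n + 2) = ∑ j ∈ Finset.range (n / 2 + 1),
      ((n - j).choose j : ℤ) * (-1 : ℤ) ^ j * 3 ^ (n - 2 * j) :=
  fib_binomial_even_general F hF0 hF1 hF n
end
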